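/- For the two-process consensus task, the projection π : O → I does not induce a bisimulation: specifically, with X = {(B,0),(W,1)}, X' = {(B,0,1),(W,1,1)}, and Y = {(B,0),(W,0)}, there is no facet Y' of the consensus output model such that π(Y') = Y and B ∈ χ(X' ∩ Y'). -/
import Mathlib


inductive Proc : Type where
  | B | W
deriving DecidableEq

/-- A facet of the consensus output model: both processes decide the same value `d`,
which must be one of the two input values (agreement and validity). Vertices are
`(process, input, decision)`. -/
def consFacet (s : Set (Proc × Fin 3 × Fin 3)) : Prop :=
  ∃ i j d : Fin 3, (d = i ∨ d = j) ∧ s = {(Proc.B, i, d), (Proc.W, j, d)}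

/-- Projection of the output model onto the input model (forgetting decisions). -/
def piCons (v : Proc × Fin 3 × Fin 3) : Proc × Fin 3 := (v.1, v.2.1)

/-- for consensus the projection π : O → I does not induce a bisimulation:
with X' = {(B,0,1),(W,1,1)} (so π(X') = X = {(B,0),(W,1)}) and Y = {(B,0),(W,0)}, there
is no facet Y' of the consensus output model with π(Y') = Y sharing a B-colored vertex
with X'. -/
theorem consensus_projection_not_bisimulation :
    ¬ ∃ Y' : Set (Proc × Fin 3 × Fin 3), consFacet Y' ∧
      piCons '' Y' = ({(Proc.B, 0), (Proc.W, 0)} : Set (Proc × Fin 3)) ∧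
      (∃ v, v ∈ (({(Proc.B, 0, 1), (Proc.W, 1, 1)} : Set (Proc × Fin 3 × Fin 3)) ∩ Y') ∧
        v.1 = Proc.B) := by
  rintro ⟨Y', ⟨i, j, d, hd, rfl⟩, himg, v, ⟨hvX, hvY⟩, hvB⟩
  -- determine i = 0 from the image
  have hBi : (Proc.B, i) ∈ ({(Proc.B, (0 : Fin 3)), (Proc.W, 0)} : Set (Proc × Fin 3)) := by
    rw [← himg]
    exact ⟨(Proc.B, i, d), Or.inl rfl, rfl⟩
  have hi : i = 0 := by
    rcases hBi with h | h
    · exact congrArg Prod.snd h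
    · exact absurd (congrArg Prod.fst h) (by simp)
  have hWj : (Proc.W, j) ∈ ({(Proc.B, (0 : Fin 3)), (Proc.W, 0)} : Set (Proc × Fin 3)) := by
    rw [← himg]
    exact ⟨(Proc.W, j, d), Or.inr rfl, rfl⟩
  have hj : j = 0 := by
    rcases hWj with h | h
    · exact absurd (congrArg Prod.fst h) (by simp)
    · exact congrArg Prod.snd h
  subst hi hj
  have hd0 : d = 0 := by rcases hd with h | h <;> exact h
  subst hd0
  -- v is B-colored in X', so v = (B,0,1)
  have hv : v = (Proc.B, 0, 1) := by
    rcases hvX with h | h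
    · exact h
    · subst h; simp at hvB
  subst hv
  rcases hvY with h | h <;> simp_all
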